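/- Assume the function φ(t) = μ({x ∈ D : b(x) < t}) is continuous on ℝ, and let k ≥ 0 satisfy μ({x ∈ D : b(x) > k}) = μ(D) − m, with B = {x ∈ D : b(x) > k} and w*(x) = (b(x)/‖b‖_{L²(B)}) 1_B(x). Then the solution of the functional sparse clustering problem is μ-a.e. unique: every feasible g with ∫_D g b dμ = ∫_D w* b dμ satisfies g = w* μ-a.e. -/

import Mathlib

/-!
Let `A = {x ∈ D | g x ≠ 0}` for a measurable representative of `g`, so that the sparsity
constraint reads `μ A ≤ μ B`. Cauchy–Schwarz and `∫_D g b = ‖b‖_{L²(B)}` give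
`∫_B b² ≤ ∫_A b²`, while the bathtub principle (`b² ≤ k²` on `A \ B`, `b² > k²` on `B \ A`)
gives the reverse inequality. In its equality case `B \ A` is null and `b = k` a.e. on `A \ B`,
which is then null because the distribution function of `b` has no jumps. So `A = B` a.e., and
equality in Cauchy–Schwarz makes `g` proportional to `b` on `A`.
-/

open MeasureTheory
open scoped ENNReal

noncomputable section

/-- A function `w` is feasible for the functional sparse clustering problem on `D` if
`w ∈ L²(D)`, `‖w‖_{L²(D)} ≤ 1`, `w ≥ 0` μ-a.e. on `D`, and `μ({x ∈ D : w(x) = 0}) ≥ m`. -/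
def FeasibleF (D : Set ℝ) (m : ℝ) (w : ℝ → ℝ) : Prop :=
  MemLp w 2 (volume.restrict D) ∧
  (∫ x in D, (w x) ^ 2) ≤ 1 ∧
  (∀ᵐ x ∂(volume.restrict D), 0 ≤ w x) ∧
  ENNReal.ofReal m ≤ volume {x ∈ D | w x = 0}

/-- The set `B = {x ∈ D : b(x) > k}`. -/
def Bf (D : Set ℝ) (b : ℝ → ℝ) (k : ℝ) : Set ℝ := {x ∈ D | k < b x}

/-- The candidate optimal weighting function `w*(x) = (b(x)/‖b‖_{L²(B)}) 1_B(x)`. -/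
def wstarF (D : Set ℝ) (b : ℝ → ℝ) (k : ℝ) : ℝ → ℝ :=
  (Bf D b k).indicator fun x => b x / Real.sqrt (∫ y in Bf D b k, (b y) ^ 2)

open Set Filter Topology

theorem ContinuousOn.measurableSet_sep_mem {α β : Type*} [TopologicalSpace α] [MeasurableSpace α]
    [OpensMeasurableSpace α] [TopologicalSpace β] {f : α → β} {s : Set α} (hf : ContinuousOn f s)
    (hs : MeasurableSet s) {U : Set β} (hU : IsOpen U) : MeasurableSet {x ∈ s | f x ∈ U} := by
  obtain ⟨u, hu, hfu⟩ := continuousOn_iff'.1 hf U hU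
  have hsep : {x ∈ s | f x ∈ U} = u ∩ s := by
    rw [← hfu]; ext x; exact and_comm
  exact hsep ▸ hu.measurableSet.inter hs

theorem ContinuousOn.memLp_two_of_isCompact {X : Type*} [TopologicalSpace X] [T2Space X]
    [MeasurableSpace X] [OpensMeasurableSpace X] {μ : Measure X} [IsFiniteMeasureOnCompacts μ]
    {f : X → ℝ} {K : Set X} (hf : ContinuousOn f K) (hK : IsCompact K) :
    MemLp f 2 (μ.restrict K) :=
  (memLp_two_iff_integrable_sq (hf.aestronglyMeasurable_of_isCompact hK hK.measurableSet)).2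
    ((hf.pow 2).integrableOn_compact hK)

section
variable {α : Type*} [MeasurableSpace α] {μ : Measure α}

theorem measure_sep_eq_eq_zero_of_continuousAt {s : Set α} {f : α → ℝ} {k : ℝ} (hs : μ s ≠ ∞)
    (hk : NullMeasurableSet {x ∈ s | f x < k} μ)
    (hφ : ContinuousAt (fun t => (μ {x ∈ s | f x < t}).toReal) k) :
    μ {x ∈ s | f x = k} = 0 := by
  set φ := fun t => (μ {x ∈ s | f x < t}).toReal
  have hfin : ∀ t, μ {x ∈ s | f x < t} ≠ ∞ := fun t => measure_ne_top_of_subset (sep_subset _ _) hs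
  have hle : ∀ᶠ t in 𝓝[>] k, (μ {x ∈ s | f x = k}).toReal ≤ φ t - φ k := by
    filter_upwards [self_mem_nhdsWithin] with t (ht : k < t)
    have hsub : {x ∈ s | f x < k} ⊆ {x ∈ s | f x < t} := fun x hx => ⟨hx.1, hx.2.trans ht⟩
    calc (μ {x ∈ s | f x = k}).toReal
        ≤ (μ ({x ∈ s | f x < t} \ {x ∈ s | f x < k})).toReal := by
          refine ENNReal.toReal_mono (measure_ne_top_of_subset sdiff_subset (hfin t))
            (measure_mono fun x hx => ⟨⟨hx.1, hx.2 ▸ ht⟩, fun h => h.2.ne hx.2⟩)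
      _ = φ t - φ k := by
          rw [measure_sdiff hsub hk (hfin k), ENNReal.toReal_sub_of_le (measure_mono hsub) (hfin t)]
  have hlim : Tendsto (fun t => φ t - φ k) (𝓝[>] k) (𝓝 0) := by
    simpa using (hφ.tendsto.mono_left nhdsWithin_le_nhds).sub_const (φ k)
  have h0 := ge_of_tendsto hlim hle
  simpa [ENNReal.toReal_eq_zero_iff, measure_ne_top_of_subset (sep_subset _ _) hs]
    using le_antisymm h0 ENNReal.toReal_nonneg

theorem setIntegral_sub_setIntegral_eq_sdiff {f : α → ℝ} {s t : Set α} (c : ℝ)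
    (hs : MeasurableSet s) (ht : MeasurableSet t) (hμs : μ s ≠ ∞) (hμt : μ t ≠ ∞)
    (hfs : IntegrableOn f s μ) (hft : IntegrableOn f t μ) :
    ∫ x in t, f x ∂μ - ∫ x in s, f x ∂μ =
      ∫ x in t \ s, (f x - c) ∂μ + ∫ x in s \ t, (c - f x) ∂μ +
        c * (μ.real (t \ s) - μ.real (s \ t)) := by
  have hts : IntegrableOn (fun _ => c) (t \ s) μ :=
    integrableOn_const (measure_ne_top_of_subset sdiff_subset hμt)
  have hst : IntegrableOn (fun _ => c) (s \ t) μ :=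
    integrableOn_const (measure_ne_top_of_subset sdiff_subset hμs)
  rw [← integral_inter_add_sdiff hs hft, ← integral_inter_add_sdiff ht hfs, inter_comm,
    integral_sub (hft.mono_set sdiff_subset) hts, integral_sub hst (hfs.mono_set sdiff_subset),
    setIntegral_const, setIntegral_const, smul_eq_mul, smul_eq_mul]
  ring

/-- Equality case of the bathtub principle. -/
theorem ae_eq_const_of_setIntegral_le {f : α → ℝ} {s t : Set α} {c : ℝ} (hc : 0 ≤ c)
    (hs : MeasurableSet s) (ht : MeasurableSet t) (hst : μ s ≤ μ t) (hμt : μ t ≠ ∞)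
    (hfs : IntegrableOn f s μ) (hft : IntegrableOn f t μ)
    (hf_s : ∀ᵐ x ∂μ.restrict (s \ t), f x ≤ c) (hf_t : ∀ᵐ x ∂μ.restrict (t \ s), c ≤ f x)
    (h : ∫ x in t, f x ∂μ ≤ ∫ x in s, f x ∂μ) :
    (∀ᵐ x ∂μ.restrict (s \ t), f x = c) ∧ ∀ᵐ x ∂μ.restrict (t \ s), f x = c := by
  have hμs : μ s ≠ ∞ := ne_top_of_le_ne_top hμt hst
  have hf_s' : 0 ≤ᵐ[μ.restrict (s \ t)] fun x => c - f x := by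
    filter_upwards [hf_s] with x hx using sub_nonneg.2 hx
  have hf_t' : 0 ≤ᵐ[μ.restrict (t \ s)] fun x => f x - c := by
    filter_upwards [hf_t] with x hx using sub_nonneg.2 hx
  have hμ : μ.real (s \ t) ≤ μ.real (t \ s) := by
    have := ENNReal.toReal_mono hμt hst
    rw [← measureReal_def, ← measureReal_def, ← measureReal_inter_add_sdiff ht hμs,
      ← measureReal_inter_add_sdiff hs hμt, inter_comm] at this
    linarith
  have hsum := setIntegral_sub_setIntegral_eq_sdiff c hs ht hμs hμt hfs hft
  have hI_s : ∫ x in s \ t, (c - f x) ∂μ = 0 := by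
    linarith [integral_nonneg_of_ae hf_s', integral_nonneg_of_ae hf_t',
      mul_le_mul_of_nonneg_left hμ hc]
  have hI_t : ∫ x in t \ s, (f x - c) ∂μ = 0 := by
    linarith [integral_nonneg_of_ae hf_s', integral_nonneg_of_ae hf_t',
      mul_le_mul_of_nonneg_left hμ hc]
  constructor
  · filter_upwards [(integral_eq_zero_iff_of_nonneg_ae hf_s'
      ((integrableOn_const (measure_ne_top_of_subset sdiff_subset hμs)).sub
        (hfs.mono_set sdiff_subset))).1 hI_s] with x hx
    exact (sub_eq_zero.1 hx).symm
  · filter_upwards [(integral_eq_zero_iff_of_nonneg_ae hf_t'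
      ((hft.mono_set sdiff_subset).sub
        (integrableOn_const (measure_ne_top_of_subset sdiff_subset hμt)))).1 hI_t] with x hx
    exact sub_eq_zero.1 hx

theorem setIntegral_sep_ne_zero_eq {s : Set α} {g F : α → ℝ} (hs : MeasurableSet s)
    (hF : ∀ x, g x = 0 → F x = 0) :
    ∫ x in {x ∈ s | g x ≠ 0}, F x ∂μ = ∫ x in s, F x ∂μ :=
  (setIntegral_eq_of_subset_of_forall_sdiff_eq_zero hs (sep_subset _ _) fun x hx =>
    hF x (not_not.1 fun h => hx.2 ⟨hx.1, h⟩)).symm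

theorem integral_mul_sub_sq {u v : α → ℝ} (hu : MemLp u 2 μ) (hv : MemLp v 2 μ) (c : ℝ) :
    ∫ x, (c * u x - v x) ^ 2 ∂μ =
      c ^ 2 * ∫ x, u x ^ 2 ∂μ - 2 * c * ∫ x, u x * v x ∂μ + ∫ x, v x ^ 2 ∂μ := by
  have hu2 : Integrable (fun x => c ^ 2 * u x ^ 2) μ := hu.integrable_sq.const_mul _
  have huv : Integrable (fun x => 2 * c * (u x * v x)) μ := (hu.integrable_mul hv).const_mul _
  have hexp : (fun x => (c * u x - v x) ^ 2) =
      fun x => c ^ 2 * u x ^ 2 - 2 * c * (u x * v x) + v x ^ 2 := by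
    funext x; ring
  have hdiff : Integrable (fun x => c ^ 2 * u x ^ 2 - 2 * c * (u x * v x)) μ := hu2.sub huv
  rw [hexp, integral_add hdiff hv.integrable_sq, integral_sub hu2 huv, integral_const_mul,
    integral_const_mul]

variable {u v : α → ℝ} {c : ℝ}

theorem sq_le_integral_sq_of_integral_mul_eq (hu : MemLp u 2 μ) (hv : MemLp v 2 μ)
    (hu1 : ∫ x, u x ^ 2 ∂μ ≤ 1) (huv : ∫ x, u x * v x ∂μ = c) : c ^ 2 ≤ ∫ x, v x ^ 2 ∂μ := by
  have h0 : 0 ≤ ∫ x, (c * u x - v x) ^ 2 ∂μ := integral_nonneg fun x => sq_nonneg _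
  rw [integral_mul_sub_sq hu hv, huv] at h0
  nlinarith [mul_le_mul_of_nonneg_left hu1 (sq_nonneg c)]

theorem ae_eq_of_integral_mul_eq (hu : MemLp u 2 μ) (hv : MemLp v 2 μ)
    (hu1 : ∫ x, u x ^ 2 ∂μ ≤ 1) (hv2 : ∫ x, v x ^ 2 ∂μ ≤ c ^ 2) (huv : ∫ x, u x * v x ∂μ = c) :
    ∀ᵐ x ∂μ, c * u x = v x := by
  have hint : Integrable (fun x => (c * u x - v x) ^ 2) μ :=
    ((hu.const_mul c).sub hv).integrable_sq
  have h0 : ∫ x, (c * u x - v x) ^ 2 ∂μ = 0 := by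
    refine le_antisymm ?_ (integral_nonneg fun x => sq_nonneg _)
    rw [integral_mul_sub_sq hu hv, huv]
    nlinarith [mul_le_mul_of_nonneg_left hu1 (sq_nonneg c)]
  filter_upwards [(integral_eq_zero_iff_of_nonneg (fun x => sq_nonneg _) hint).1 h0] with x hx
  exact sub_eq_zero.1 (pow_eq_zero_iff two_ne_zero |>.1 hx)

end

section
variable {D : Set ℝ} {b : ℝ → ℝ} {k : ℝ}

theorem Bf_subset : Bf D b k ⊆ D := sep_subset _ _

theorem measurableSet_Bf (hD : MeasurableSet D) (hb : ContinuousOn b D) :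
    MeasurableSet (Bf D b k) :=
  hb.measurableSet_sep_mem hD isOpen_Ioi

theorem integral_wstarF_mul (hB : MeasurableSet (Bf D b k)) :
    ∫ x in D, wstarF D b k x * b x = √(∫ x in Bf D b k, b x ^ 2) := by
  simp_rw [wstarF, ← indicator_mul_left]
  rw [setIntegral_indicator hB, inter_eq_self_of_subset_right Bf_subset]
  simp_rw [div_mul_eq_mul_div, ← sq]
  rw [integral_div, Real.div_sqrt]

theorem setIntegral_Bf_sq_pos (hD : IsCompact D) (hb : ContinuousOn b D) (hk : 0 ≤ k)
    (hB0 : volume (Bf D b k) ≠ 0) : 0 < ∫ x in Bf D b k, b x ^ 2 := by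
  have hsupp : Bf D b k ⊆ Function.support fun x => b x ^ 2 := fun x hx =>
    pow_ne_zero 2 (hk.trans_lt hx.2).ne'
  rw [setIntegral_pos_iff_support_of_nonneg_ae (ae_of_all _ fun x => sq_nonneg _)
      (((hb.pow 2).integrableOn_compact hD).mono_set Bf_subset),
    inter_eq_self_of_subset_right hsupp]
  exact pos_iff_ne_zero.2 hB0

theorem ae_eq_Bf_of_setIntegral_sq_le (hD : IsCompact D) (hb : ContinuousOn b D)
    (hbpos : ∀ᵐ x ∂(volume.restrict D), 0 ≤ b x)
    (hφ : ContinuousAt (fun t => (volume {x ∈ D | b x < t}).toReal) k) (hk : 0 ≤ k)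
    {A : Set ℝ} (hA : MeasurableSet A) (hAD : A ⊆ D) (hAB : volume A ≤ volume (Bf D b k))
    (hint : ∫ x in Bf D b k, b x ^ 2 ≤ ∫ x in A, b x ^ 2) : A =ᵐ[volume] Bf D b k := by
  have hDm : MeasurableSet D := hD.isClosed.measurableSet
  have hB : MeasurableSet (Bf D b k) := measurableSet_Bf hDm hb
  have hb2 : IntegrableOn (fun x => b x ^ 2) D := (hb.pow 2).integrableOn_compact hD
  have hbpos' : ∀ᵐ x ∂volume.restrict (A \ Bf D b k), 0 ≤ b x :=
    ae_restrict_of_ae_restrict_of_subset (sdiff_subset.trans hAD) hbpos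
  have hb2_AB : ∀ᵐ x ∂volume.restrict (A \ Bf D b k), b x ^ 2 ≤ k ^ 2 := by
    filter_upwards [hbpos', ae_restrict_mem (hA.diff hB)] with x h0 hx
    exact pow_le_pow_left₀ h0 (not_lt.1 fun h => hx.2 ⟨hAD hx.1, h⟩) 2
  have hb2_BA : ∀ᵐ x ∂volume.restrict (Bf D b k \ A), k ^ 2 ≤ b x ^ 2 :=
    ae_restrict_of_forall_mem (hB.diff hA) fun x hx => pow_le_pow_left₀ hk hx.1.2.le 2
  obtain ⟨hAB_eq, hBA_eq⟩ := ae_eq_const_of_setIntegral_le (sq_nonneg k) hA hB hAB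
    (measure_ne_top_of_subset Bf_subset hD.measure_lt_top.ne)
    (hb2.mono_set hAD) (hb2.mono_set Bf_subset) hb2_AB hb2_BA hint
  refine ae_eq_set.2 ⟨measure_mono_null_ae ?_ (measure_sep_eq_eq_zero_of_continuousAt
    hD.measure_lt_top.ne (hb.measurableSet_sep_mem hDm isOpen_Iio).nullMeasurableSet hφ), ?_⟩
  · filter_upwards [(ae_restrict_iff' (hA.diff hB)).1 (hAB_eq.and hbpos')] with x hx hmem
    exact ⟨hAD hmem.1, (sq_eq_sq₀ (hx hmem).2 hk).1 (hx hmem).1⟩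
  · refine measure_eq_zero_iff_ae_notMem.2 ?_
    filter_upwards [(ae_restrict_iff' (hB.diff hA)).1 hBA_eq] with x hx hmem
    exact (pow_lt_pow_left₀ hmem.1.2 hk two_ne_zero).ne' (hx hmem)

theorem ae_eq_wstarF_of_ae_eq_Bf (hD : MeasurableSet D) {g : ℝ → ℝ} {A : Set ℝ}
    (hA : MeasurableSet A) (hAB : A =ᵐ[volume] Bf D b k) (hc : √(∫ x in Bf D b k, b x ^ 2) ≠ 0)
    (hgA : ∀ᵐ x ∂volume.restrict A, √(∫ x in Bf D b k, b x ^ 2) * g x = b x)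
    (hg0 : ∀ x ∈ D \ A, g x = 0) :
    g =ᵐ[volume.restrict D] wstarF D b k := by
  filter_upwards [ae_restrict_mem hD, ae_restrict_of_ae ((ae_restrict_iff' hA).1 hgA),
    ae_restrict_of_ae hAB.mem_iff] with x hxD hgx hAx
  by_cases hxB : x ∈ Bf D b k
  · rw [wstarF, indicator_of_mem hxB, eq_div_iff hc, mul_comm]
    exact hgx (hAx.2 hxB)
  · rw [wstarF, indicator_of_notMem hxB]
    exact hg0 x ⟨hxD, fun h => hxB (hAx.1 h)⟩

theorem FeasibleF.congr_ae {m : ℝ} {g g' : ℝ → ℝ} (hD : MeasurableSet D)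
    (hg : FeasibleF D m g) (hgg' : g =ᵐ[volume.restrict D] g') : FeasibleF D m g' := by
  obtain ⟨hL2, h1, hnn, hm⟩ := hg
  refine ⟨hL2.ae_eq hgg', ?_, ?_, hm.trans (measure_mono_ae ?_)⟩
  · have hsq : ∫ x in D, g x ^ 2 = ∫ x in D, g' x ^ 2 :=
      integral_congr_ae (hgg'.mono fun x hx => congrArg (· ^ 2) hx)
    rwa [← hsq]
  · filter_upwards [hnn, hgg'] with x hx hxx using hxx ▸ hx
  · filter_upwards [(ae_restrict_iff' hD).1 hgg'] with x hx hmem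
    exact ⟨hmem.1, hx hmem.1 ▸ hmem.2⟩

theorem FeasibleF.measure_sep_ne_zero_le {m : ℝ} {g : ℝ → ℝ} (hD : MeasurableSet D)
    (hDfin : volume D ≠ ∞) (hgm : Measurable g) (hg : FeasibleF D m g) :
    volume {x ∈ D | g x ≠ 0} ≤ volume D - ENNReal.ofReal m := by
  have hZ : MeasurableSet {x ∈ D | g x = 0} := hD.inter (hgm (measurableSet_singleton 0))
  have hsplit : {x ∈ D | g x ≠ 0} = D \ {x ∈ D | g x = 0} := by
    ext x; simp only [mem_ofPred_eq, Set.mem_sdiff]; tauto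
  rw [hsplit, measure_sdiff (sep_subset _ _) hZ.nullMeasurableSet
    (measure_ne_top_of_subset (sep_subset _ _) hDfin)]
  exact tsub_le_tsub_left hg.2.2.2 _

end

theorem functional_sparse_clustering_uniqueness_general (D : Set ℝ) (hD : IsCompact D)
    (m : ℝ) (b : ℝ → ℝ)
    (hmD : ENNReal.ofReal m < volume D)
    (hb : ContinuousOn b D)
    (hbpos : ∀ᵐ x ∂(volume.restrict D), 0 ≤ b x)
    (hphi : Continuous fun t : ℝ => (volume {x ∈ D | b x < t}).toReal)
    (k : ℝ) (hk : 0 ≤ k)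
    (hkm : volume (Bf D b k) = volume D - ENNReal.ofReal m)
    (g : ℝ → ℝ) (hg : FeasibleF D m g)
    (heq : (∫ x in D, g x * b x) = ∫ x in D, wstarF D b k x * b x) :
    g =ᵐ[volume.restrict D] wstarF D b k := by
  have hDm : MeasurableSet D := hD.isClosed.measurableSet
  obtain ⟨g', hg'm, hgg'⟩ := hg.1.aestronglyMeasurable.aemeasurable
  have hg' : FeasibleF D m g' := hg.congr_ae hDm hgg'
  set A := {x ∈ D | g' x ≠ 0}
  have hA : MeasurableSet A := hDm.inter (hg'm (measurableSet_singleton 0).compl)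
  have hAD : A ⊆ D := sep_subset _ _
  set N := ∫ x in Bf D b k, b x ^ 2
  have hN : 0 < N := setIntegral_Bf_sq_pos hD hb hk (hkm ▸ (tsub_pos_iff_lt.2 hmD).ne')
  have hbA : MemLp b 2 (volume.restrict A) :=
    (hb.memLp_two_of_isCompact hD).mono_measure (Measure.restrict_mono hAD le_rfl)
  have hg'A : MemLp g' 2 (volume.restrict A) :=
    hg'.1.mono_measure (Measure.restrict_mono hAD le_rfl)
  have hg'1 : ∫ x in A, g' x ^ 2 ≤ 1 := by
    rw [setIntegral_sep_ne_zero_eq hDm fun x hx => by rw [hx, zero_pow two_ne_zero]]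
    exact hg'.2.1
  have hg'b : ∫ x in A, g' x * b x = √N := by
    rw [setIntegral_sep_ne_zero_eq hDm fun x hx => by rw [hx, zero_mul],
      ← integral_wstarF_mul (measurableSet_Bf hDm hb), ← heq]
    exact integral_congr_ae (hgg'.mono fun x hx => congrArg (· * b x) hx.symm)
  have hNA : N ≤ ∫ x in A, b x ^ 2 := by
    simpa only [Real.sq_sqrt hN.le] using sq_le_integral_sq_of_integral_mul_eq hg'A hbA hg'1 hg'b
  have hAB : A =ᵐ[volume] Bf D b k := ae_eq_Bf_of_setIntegral_sq_le hD hb hbpos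
    hphi.continuousAt hk hA hAD (hkm ▸ hg'.measure_sep_ne_zero_le hDm hD.measure_lt_top.ne hg'm) hNA
  have hcg : ∀ᵐ x ∂volume.restrict A, √N * g' x = b x := ae_eq_of_integral_mul_eq hg'A hbA hg'1
    (by rw [setIntegral_congr_set hAB, Real.sq_sqrt hN.le]) hg'b
  exact hgg'.trans (ae_eq_wstarF_of_ae_eq_Bf hDm hA hAB (Real.sqrt_pos.2 hN).ne' hcg
    fun x hx => not_not.1 fun h => hx.2 ⟨hx.1, h⟩)

/-- μ-a.e. uniqueness of the solution to functional sparse clustering: if the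
distribution function `φ(t) = μ({x ∈ D : b(x) < t})` is continuous and `k ≥ 0`
satisfies `μ({x ∈ D : b(x) > k}) = μ(D) − m`, then every feasible `g` attaining
`∫_D g b dμ = ∫_D w* b dμ` equals `w*` μ-a.e. on `D`. -/
theorem functional_sparse_clustering_uniqueness (D : Set ℝ) (hD : IsCompact D)
    (m : ℝ) (b : ℝ → ℝ)
    (hm : 0 < m) (hmD : ENNReal.ofReal m < volume D) (hDfin : volume D < ⊤)
    (hb : ContinuousOn b D)
    (hbpos : ∀ᵐ x ∂(volume.restrict D), 0 ≤ b x)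
    (hphi : Continuous fun t : ℝ => (volume {x ∈ D | b x < t}).toReal)
    (k : ℝ) (hk : 0 ≤ k)
    (hkm : volume (Bf D b k) = volume D - ENNReal.ofReal m)
    (g : ℝ → ℝ) (hg : FeasibleF D m g)
    (heq : (∫ x in D, g x * b x) = ∫ x in D, wstarF D b k x * b x) :
    g =ᵐ[volume.restrict D] wstarF D b k :=
  functional_sparse_clustering_uniqueness_general D hD m b hmD hb hbpos hphi k hk hkm g hg heq

end
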